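/- If in a finite geometry with at least two lines any two distinct lines intersect (have a common point), then the number of points equals the number of lines: v = b. -/

import Mathlib

/-!
For a point `p` off a line `ℓ`, the lines through `p` correspond to the points of `ℓ`, so
`r p = k ℓ` (lines through `p`, points on `ℓ`). Weighting each non-incident pair `(ℓ, p)` by
`1 / (b (v - k ℓ))` or by `1 / (v (b - r p))` gives total weight `1` either way. Since
`b (v - k) - v (b - k) = k (v - b)`, if `v ≠ b` one weight is strictly larger on every
non-incident pair, which is absurd.
-/

/-- A finite geometry (finite linear space): any two distinct points lie on exactly one
common line, and every line contains at least two points. -/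
def IsGeometry {P : Type*} (lines : Finset (Finset P)) : Prop :=
  (∀ p q : P, p ≠ q → ∃! ℓ, ℓ ∈ lines ∧ p ∈ ℓ ∧ q ∈ ℓ) ∧
  (∀ ℓ ∈ lines, 2 ≤ ℓ.card)

open Finset

namespace Finset

variable {α β : Type*} {s : Finset α} {t : Finset β} {r : α → β → Prop}
  [∀ a b, Decidable (r a b)]

theorem sum_sum_bipartiteAbove_inv_card_mul_card (hs : s.Nonempty)
    (hst : ∀ a ∈ s, ∃ b ∈ t, r a b) :
    ∑ a ∈ s, ∑ _b ∈ t.bipartiteAbove r a, ((#s * #(t.bipartiteAbove r a) : ℕ) : ℚ)⁻¹ = 1 := by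
  have hinner (a) (ha : a ∈ s) :
      ∑ _b ∈ t.bipartiteAbove r a, ((#s * #(t.bipartiteAbove r a) : ℕ) : ℚ)⁻¹ = (#s : ℚ)⁻¹ := by
    obtain ⟨b, hb, hab⟩ := hst a ha
    have hpos : (#(t.bipartiteAbove r a) : ℚ) ≠ 0 :=
      Nat.cast_ne_zero.mpr (card_ne_zero_of_mem ((mem_bipartiteAbove r).mpr ⟨hb, hab⟩))
    rw [sum_const, nsmul_eq_mul, Nat.cast_mul, mul_inv, mul_left_comm, mul_inv_cancel₀ hpos,
      mul_one]
  rw [sum_congr rfl hinner, sum_const, nsmul_eq_mul,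
    mul_inv_cancel₀ (Nat.cast_ne_zero.mpr hs.card_pos.ne')]

/-- The weightings `1 / (#s * deg a)` and `1 / (#t * deg b)` of the pairs `(a, b)` of `r` both
have total weight `1`. -/
theorem not_forall_card_mul_card_bipartiteAbove_lt (hs : s.Nonempty)
    (hst : ∀ a ∈ s, ∃ b ∈ t, r a b) (hts : ∀ b ∈ t, ∃ a ∈ s, r a b) :
    ¬ ∀ a ∈ s, ∀ b ∈ t, r a b →
      #s * #(t.bipartiteAbove r a) < #t * #(s.bipartiteBelow r b) := by
  intro hlt
  obtain ⟨a₀, ha₀⟩ := hs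
  obtain ⟨b₀, hb₀, -⟩ := hst a₀ ha₀
  have key : ∑ a ∈ s, ∑ b ∈ t.bipartiteAbove r a,
        ((#t * #(s.bipartiteBelow r b) : ℕ) : ℚ)⁻¹ <
      ∑ a ∈ s, ∑ _b ∈ t.bipartiteAbove r a, ((#s * #(t.bipartiteAbove r a) : ℕ) : ℚ)⁻¹ := by
    refine sum_lt_sum_of_nonempty ⟨a₀, ha₀⟩ fun a ha => ?_
    obtain ⟨b, hb, hab⟩ := hst a ha
    refine sum_lt_sum_of_nonempty ⟨b, (mem_bipartiteAbove r).mpr ⟨hb, hab⟩⟩ fun b hb => ?_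
    obtain ⟨hb, hab⟩ := (mem_bipartiteAbove r).mp hb
    refine inv_strictAnti₀ ?_ (Nat.cast_lt.mpr (hlt a ha b hb hab))
    exact Nat.cast_pos.mpr (mul_pos (card_pos.mpr ⟨a₀, ha₀⟩)
      (card_pos.mpr ⟨b, (mem_bipartiteAbove r).mpr ⟨hb, hab⟩⟩))
  rw [sum_sum_bipartiteAbove_eq_sum_sum_bipartiteBelow,
    sum_sum_bipartiteAbove_inv_card_mul_card ⟨a₀, ha₀⟩ hst] at key
  exact key.ne (sum_sum_bipartiteAbove_inv_card_mul_card (r := Function.swap r) ⟨b₀, hb₀⟩ hts)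

end Finset

namespace IsGeometry

variable {P : Type*} {lines : Finset (Finset P)}

theorem eq_of_mem_of_mem (h : IsGeometry lines) {ℓ m : Finset P} (hℓ : ℓ ∈ lines)
    (hm : m ∈ lines) {p q : P} (hpq : p ≠ q) (hpℓ : p ∈ ℓ) (hqℓ : q ∈ ℓ) (hpm : p ∈ m)
    (hqm : q ∈ m) : ℓ = m :=
  (h.1 p q hpq).unique ⟨hℓ, hpℓ, hqℓ⟩ ⟨hm, hpm, hqm⟩

theorem exists_notMem_line (h : IsGeometry lines) (hlines : 2 ≤ #lines) {ℓ : Finset P}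
    (hℓ : ℓ ∈ lines) : ∃ p, p ∉ ℓ := by
  by_contra! hfull
  obtain ⟨m, hm, hmℓ⟩ := exists_mem_ne hlines ℓ
  obtain ⟨p, hp, q, hq, hpq⟩ := one_lt_card.mp (h.2 m hm)
  exact hmℓ (h.eq_of_mem_of_mem hm hℓ hpq hp hq (hfull p) (hfull q))

theorem exists_line_notMem (h : IsGeometry lines) (hlines : 2 ≤ #lines) (p : P) :
    ∃ ℓ ∈ lines, p ∉ ℓ := by
  by_contra! hall
  obtain ⟨ℓ, hℓ⟩ := card_pos.mp (by omega : 0 < #lines)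
  obtain ⟨q, hq, hqp⟩ := exists_mem_ne (h.2 ℓ hℓ) p
  obtain ⟨s, hs⟩ := h.exists_notMem_line hlines hℓ
  obtain ⟨m, ⟨hm, hqm, hsm⟩, -⟩ := h.1 q s (ne_of_mem_of_not_mem hq hs)
  exact hs (h.eq_of_mem_of_mem hℓ hm hqp.symm (hall ℓ hℓ) hq (hall m hm) hqm ▸ hsm)

/-- Each line through `p` meets `ℓ` in exactly one point, and each point of `ℓ` lies on exactly
one line through `p`. -/
theorem card_filter_mem_eq_card_of_notMem [DecidableEq P] (h : IsGeometry lines)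
    (hint : ∀ ℓ₁ ∈ lines, ∀ ℓ₂ ∈ lines, ℓ₁ ≠ ℓ₂ → ∃ p, p ∈ ℓ₁ ∧ p ∈ ℓ₂)
    {ℓ : Finset P} (hℓ : ℓ ∈ lines) {p : P} (hp : p ∉ ℓ) :
    #{m ∈ lines | p ∈ m} = #ℓ := by
  have hne {m : Finset P} (hpm : p ∈ m) : m ≠ ℓ := by rintro rfl; exact hp hpm
  apply le_antisymm
  · refine card_le_card_of_forall_subsingleton (fun m q => q ∈ m) (fun m hm => ?_) ?_
    · obtain ⟨hm, hpm⟩ := mem_filter.mp hm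
      obtain ⟨q, hqm, hqℓ⟩ := hint m hm ℓ hℓ (hne hpm)
      exact ⟨q, hqℓ, hqm⟩
    · intro q hq m₁ ⟨hm₁, hqm₁⟩ m₂ ⟨hm₂, hqm₂⟩
      obtain ⟨hm₁, hpm₁⟩ := mem_filter.mp hm₁
      obtain ⟨hm₂, hpm₂⟩ := mem_filter.mp hm₂
      exact h.eq_of_mem_of_mem hm₁ hm₂ (ne_of_mem_of_not_mem hq hp).symm hpm₁ hqm₁ hpm₂ hqm₂
  · refine card_le_card_of_forall_subsingleton' (fun m q => q ∈ m) (fun q hq => ?_) ?_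
    · obtain ⟨m, ⟨hm, hpm, hqm⟩, -⟩ := h.1 p q (ne_of_mem_of_not_mem hq hp).symm
      exact ⟨m, mem_filter.mpr ⟨hm, hpm⟩, hqm⟩
    · intro m hm q₁ ⟨hq₁, hq₁m⟩ q₂ ⟨hq₂, hq₂m⟩
      obtain ⟨hm, hpm⟩ := mem_filter.mp hm
      by_contra hq
      exact hne hpm (h.eq_of_mem_of_mem hm hℓ hq hq₁m hq₂m hq₁ hq₂)

end IsGeometry

/-- If in a finite geometry with at least two lines any two distinct lines intersect,
then the number of points equals the number of lines. -/
theorem card_eq_of_lines_intersect {P : Type*} [Fintype P] (lines : Finset (Finset P))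
    (hgeom : IsGeometry lines) (hlines : 2 ≤ lines.card)
    (hint : ∀ ℓ₁ ∈ lines, ∀ ℓ₂ ∈ lines, ℓ₁ ≠ ℓ₂ → ∃ p, p ∈ ℓ₁ ∧ p ∈ ℓ₂) :
    Fintype.card P = lines.card := by
  classical
  obtain ⟨ℓ₀, hℓ₀⟩ : lines.Nonempty := card_pos.mp (by omega)
  have hmiss (ℓ) (hℓ : ℓ ∈ lines) : ∃ p ∈ univ, p ∉ ℓ := by
    simpa using hgeom.exists_notMem_line hlines hℓ
  obtain ⟨p₀, -, -⟩ := hmiss ℓ₀ hℓ₀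
  have hoff (p) (_ : p ∈ univ) : ∃ ℓ ∈ lines, p ∉ ℓ := hgeom.exists_line_notMem hlines p
  have hcount (ℓ) (hℓ : ℓ ∈ lines) (p) (hp : p ∉ ℓ) :
      #{q | q ∉ ℓ} + #ℓ = Fintype.card P ∧ #{m ∈ lines | p ∉ m} + #ℓ = #lines ∧ 0 < #ℓ := by
    refine ⟨?_, ?_, by linarith [hgeom.2 ℓ hℓ]⟩
    · rw [filter_not, filter_mem_eq_inter, univ_inter,
        card_sdiff_add_card_eq_card (subset_univ ℓ), card_univ]
    · rw [← hgeom.card_filter_mem_eq_card_of_notMem hint hℓ hp, add_comm,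
        card_filter_add_card_filter_not]
  rcases lt_trichotomy (Fintype.card P) #lines with hlt | heq | hgt
  · refine absurd ?_ <| not_forall_card_mul_card_bipartiteAbove_lt (r := fun ℓ p => p ∉ ℓ)
      ⟨ℓ₀, hℓ₀⟩ hmiss hoff
    intro ℓ hℓ p _ hp
    obtain ⟨h₁, h₂, h₃⟩ := hcount ℓ hℓ p hp
    simp only [bipartiteAbove, bipartiteBelow, card_univ]
    nlinarith
  · exact heq
  · refine absurd ?_ <| not_forall_card_mul_card_bipartiteAbove_lt (r := fun p ℓ => p ∉ ℓ)
      ⟨p₀, mem_univ p₀⟩ hoff hmiss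
    intro p _ ℓ hℓ hp
    obtain ⟨h₁, h₂, h₃⟩ := hcount ℓ hℓ p hp
    simp only [bipartiteAbove, bipartiteBelow, card_univ]
    nlinarith
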